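/- arXiv:0711.2135 — 2 statements merged into one kernel-verified Lean document; each statement's English description precedes it below -/
import Mathlib

section
/- Let A be a real square matrix with a simple eigenvalue r > 0 such that every other eigenvalue has modulus strictly less than r, and let v be an eigenvector of A for r and u an eigenvector of the transpose ᵗA for r, normalized so that (u, v) = 1. Then for every vector x, lim_{n→∞} r^{−n} A^n x = (u, x) v. -/
/-! With `P = vecMulVec v u` (idempotent since `u ⬝ᵥ v = 1`, and `A * P = P * A = r • P`) and
the deflated matrix `B = A - r • P`, one has `A ^ n = r ^ n • P + B ^ n * (1 - P)`. An
eigenvector of `B` for a nonzero eigenvalue is killed by `u`, hence is an eigenvector of `A` for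
the same eigenvalue; simplicity of `r` excludes the eigenvalue `r`, and domination bounds the
others. So the spectral radius of the complexified `B` is below `r`, and Gelfand's formula gives
`B ^ n = o(r ^ n)`. -/

open Filter Topology Asymptotics
open scoped NNReal

section GelfandDecay

variable {A : Type*} [NormedRing A] [NormedAlgebra ℂ A] [CompleteSpace A]

theorem spectrum.eventually_norm_pow_le_of_spectralRadius_lt (a : A) {c : ℝ≥0}
    (h : spectralRadius ℂ a < c) : ∀ᶠ n : ℕ in atTop, ‖a ^ n‖ ≤ c ^ n := by
  filter_upwards [(pow_nnnorm_pow_one_div_tendsto_nhds_spectralRadius a).eventually_lt_const h,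
    eventually_ne_atTop 0] with n hn hn0
  have hpow := ENNReal.rpow_lt_rpow hn (by positivity : (0 : ℝ) < n)
  rw [← ENNReal.rpow_mul, one_div, inv_mul_cancel₀ (Nat.cast_ne_zero.2 hn0), ENNReal.rpow_one,
    ENNReal.rpow_natCast, ← ENNReal.coe_pow, ENNReal.coe_lt_coe] at hpow
  exact_mod_cast hpow.le

theorem spectrum.isLittleO_pow_of_forall_norm_lt (a : A) {r : ℝ}
    (h : ∀ z ∈ spectrum ℂ a, ‖z‖ < r) : (fun n : ℕ => a ^ n) =o[atTop] (fun n => r ^ n) := by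
  cases subsingleton_or_nontrivial A
  · simpa only [Subsingleton.elim _ (0 : A)] using isLittleO_zero _ _
  have hρ : spectralRadius ℂ a < r.toNNReal :=
    spectrum.spectralRadius_lt_of_forall_lt a fun z hz => Real.lt_toNNReal_iff_coe_lt.2 (h z hz)
  obtain ⟨c, hac, hcr⟩ := ENNReal.lt_iff_exists_nnreal_btwn.mp hρ
  have hcr : (c : ℝ) < r := Real.lt_toNNReal_iff_coe_lt.1 (ENNReal.coe_lt_coe.1 hcr)
  refine (IsBigO.of_bound' ?_).trans_isLittleO (isLittleO_pow_pow_of_lt_left c.2 hcr)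
  filter_upwards [eventually_norm_pow_le_of_spectralRadius_lt a hac] with n hn
  rwa [Real.norm_eq_abs, abs_of_nonneg (pow_nonneg c.2 n)]

end GelfandDecay

section Deflation

variable {𝕜 R : Type*}

theorem pow_eq_smul_add_pow_sub_smul_mul [CommRing 𝕜] [Ring R] [Algebra 𝕜 R] {a p : R} {r : 𝕜}
    (hp : IsIdempotentElem p) (hap : a * p = r • p) (hpa : p * a = r • p) (n : ℕ) :
    a ^ n = r ^ n • p + (a - r • p) ^ n * (1 - p) := by
  have hleft : (1 - p) * a = a - r • p := by rw [sub_mul, one_mul, hpa]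
  have hright : (a - r • p) * (1 - p) = a - r • p := by
    rw [mul_sub, mul_one, sub_mul, hap, smul_mul_assoc, hp.eq, sub_self, sub_zero]
  induction n with
  | zero => simp
  | succ n ih =>
    rw [pow_succ, ih, add_mul, smul_mul_assoc, hpa, smul_smul, ← pow_succ, mul_assoc, hleft,
      pow_succ (a - r • p), mul_assoc _ (a - r • p), hright]

theorem tendsto_inv_pow_smul_pow_of_isIdempotentElem [NormedField 𝕜] [NormedRing R]
    [NormedAlgebra 𝕜 R] {a p : R} {r : 𝕜} (hr : r ≠ 0) (hp : IsIdempotentElem p)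
    (hap : a * p = r • p) (hpa : p * a = r • p)
    (hb : (fun n : ℕ => (a - r • p) ^ n) =o[atTop] (fun n => r ^ n)) :
    Tendsto (fun n : ℕ => (r ^ n)⁻¹ • a ^ n) atTop (𝓝 p) := by
  have hsplit : ∀ n : ℕ, (r ^ n)⁻¹ • a ^ n = p + ((r ^ n)⁻¹ • (a - r • p) ^ n) * (1 - p) := by
    intro n
    rw [pow_eq_smul_add_pow_sub_smul_mul hp hap hpa, smul_add, smul_smul,
      inv_mul_cancel₀ (pow_ne_zero n hr), one_smul, smul_mul_assoc]
  simp_rw [hsplit]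
  simpa using tendsto_const_nhds.add (hb.tendsto_inv_smul_nhds_zero.mul_const (1 - p))

end Deflation

namespace Matrix

variable {n : Type*} [Fintype n]

section Field

variable {K : Type*} [Field K]

theorem exists_mulVec_eq_smul_of_mem_spectrum [DecidableEq n] {M : Matrix n n K} {μ : K}
    (h : μ ∈ spectrum K M) : ∃ z ≠ 0, M *ᵥ z = μ • z := by
  rw [← spectrum_toLin', ← Module.End.hasEigenvalue_iff_mem_spectrum] at h
  obtain ⟨z, hz, hz0⟩ := h.exists_hasEigenvector
  exact ⟨z, hz0, Module.End.mem_eigenspace_iff.mp hz⟩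

theorem isRoot_charpoly_of_mulVec_eq_smul [DecidableEq n] (M : Matrix n n K) {μ : K}
    {z : n → K} (hz : z ≠ 0) (h : M *ᵥ z = μ • z) : M.charpoly.IsRoot μ := by
  rw [← charpoly_toLin', ← Module.End.hasEigenvalue_iff_isRoot_charpoly]
  exact Module.End.hasEigenvalue_of_hasEigenvector ⟨Module.End.mem_eigenspace_iff.mpr h, hz⟩

theorem two_le_rootMultiplicity_charpoly [DecidableEq n] (M : Matrix n n K) {μ : K} {a b : n → K}
    (ha : M *ᵥ a = μ • a) (hb : M *ᵥ b = μ • b) (hab : LinearIndependent K ![a, b]) :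
    2 ≤ M.charpoly.rootMultiplicity μ := by
  rw [← charpoly_toLin']
  refine le_trans ?_ (LinearMap.finrank_eigenspace_le _ μ)
  have hspan : Submodule.span K (Set.range ![a, b]) ≤ Module.End.eigenspace (toLin' M) μ := by
    rw [Submodule.span_le, Set.range_subset_iff]
    intro i
    fin_cases i <;> simpa [Module.End.mem_eigenspace_iff]
  calc 2 = Module.finrank K (Submodule.span K (Set.range ![a, b])) := by
        rw [finrank_span_eq_card hab]; simp
    _ ≤ _ := Submodule.finrank_mono hspan

theorem linearIndependent_pair_of_dotProduct {u v z : n → K} (huv : u ⬝ᵥ v = 1)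
    (huz : u ⬝ᵥ z = 0) (hz : z ≠ 0) : LinearIndependent K ![v, z] := by
  rw [LinearIndependent.pair_iff]
  intro s t hst
  have hs : s = 0 := by simpa [huv, huz] using congrArg (u ⬝ᵥ ·) hst
  subst hs
  exact ⟨rfl, (smul_eq_zero.mp (by simpa using hst)).resolve_right hz⟩

variable {M : Matrix n n K} {r : K} {u v : n → K}

theorem vecMul_sub_smul_vecMulVec (hu : u ᵥ* M = r • u) (huv : u ⬝ᵥ v = 1) :
    u ᵥ* (M - r • vecMulVec v u) = 0 := by
  rw [vecMul_sub, vecMul_smul, vecMul_vecMulVec, huv, one_smul, hu, sub_self]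

theorem dotProduct_eq_zero_and_mulVec_eq_smul (hu : u ᵥ* M = r • u) (huv : u ⬝ᵥ v = 1)
    {μ : K} (hμ : μ ≠ 0) {z : n → K} (hz : (M - r • vecMulVec v u) *ᵥ z = μ • z) :
    u ⬝ᵥ z = 0 ∧ M *ᵥ z = μ • z := by
  have huz : u ⬝ᵥ z = 0 := by
    have h := congrArg (u ⬝ᵥ ·) hz
    simp only [dotProduct_mulVec, vecMul_sub_smul_vecMulVec hu huv, zero_dotProduct,
      dotProduct_smul, smul_eq_mul] at h
    exact (mul_eq_zero.mp h.symm).resolve_left hμ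
  refine ⟨huz, ?_⟩
  simpa [sub_mulVec, smul_mulVec, vecMulVec_mulVec, huz] using hz

end Field

theorem norm_lt_of_mem_spectrum_sub_smul_vecMulVec [DecidableEq n] {M : Matrix n n ℂ} {r : ℝ}
    (hr : 0 < r) {u v : n → ℂ} (hv : M *ᵥ v = (r : ℂ) • v) (hu : u ᵥ* M = (r : ℂ) • u)
    (huv : u ⬝ᵥ v = 1)
    (hsimple : M.charpoly.rootMultiplicity (r : ℂ) = 1)
    (hdom : ∀ μ : ℂ, M.charpoly.IsRoot μ → μ ≠ r → ‖μ‖ < r) :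
    ∀ μ ∈ spectrum ℂ (M - (r : ℂ) • vecMulVec v u), ‖μ‖ < r := by
  intro μ hμ
  rcases eq_or_ne μ 0 with rfl | hμ0
  · simpa using hr
  obtain ⟨z, hz0, hz⟩ := exists_mulVec_eq_smul_of_mem_spectrum hμ
  obtain ⟨huz, hMz⟩ := dotProduct_eq_zero_and_mulVec_eq_smul hu huv hμ0 hz
  refine hdom μ (M.isRoot_charpoly_of_mulVec_eq_smul hz0 hMz) fun hμr => ?_
  subst hμr
  have := M.two_le_rootMultiplicity_charpoly hv hMz
    (linearIndependent_pair_of_dotProduct huv huz hz0)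
  omega

section Asymptotics

-- Complexification preserves the Frobenius norm, which makes it the convenient Banach algebra norm.
attribute [local instance] Matrix.frobeniusNormedRing Matrix.frobeniusNormedAlgebra

variable [DecidableEq n]

theorem isLittleO_pow_sub_smul_vecMulVec {A : Matrix n n ℝ} {r : ℝ} (hr : 0 < r) {u v : n → ℝ}
    (hv : A *ᵥ v = r • v) (hu : u ᵥ* A = r • u) (huv : u ⬝ᵥ v = 1)
    (hsimple : (A.map (algebraMap ℝ ℂ)).charpoly.rootMultiplicity (r : ℂ) = 1)
    (hdom : ∀ μ : ℂ, (A.map (algebraMap ℝ ℂ)).charpoly.IsRoot μ → μ ≠ r → ‖μ‖ < r) :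
    (fun k : ℕ => (A - r • vecMulVec v u) ^ k) =o[atTop] (fun k => r ^ k) := by
  set f := algebraMap ℝ ℂ
  have hmap :
      (A - r • vecMulVec v u).map f = A.map f - (r : ℂ) • vecMulVec (f ∘ v) (f ∘ u) := by
    ext i j; simp [f, vecMulVec_apply]
  have hvc : A.map f *ᵥ (f ∘ v) = (r : ℂ) • (f ∘ v) := by
    ext i; rw [← RingHom.map_mulVec, hv]; simp [f]
  have huc : (f ∘ u) ᵥ* A.map f = (r : ℂ) • (f ∘ u) := by
    ext i; rw [← RingHom.map_vecMul, hu]; simp [f]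
  have huvc : (f ∘ u) ⬝ᵥ (f ∘ v) = 1 := by rw [← RingHom.map_dotProduct, huv, map_one]
  have hspec := norm_lt_of_mem_spectrum_sub_smul_vecMulVec hr hvc huc huvc hsimple hdom
  rw [← hmap] at hspec
  have hnorm (k : ℕ) :
      ‖((A - r • vecMulVec v u).map f) ^ k‖ = ‖(A - r • vecMulVec v u) ^ k‖ := by
    rw [← Matrix.map_pow, frobenius_norm_map_eq _ _ fun a => by simp [f]]
  refine IsLittleO.of_norm_left ?_
  simpa only [hnorm] using (spectrum.isLittleO_pow_of_forall_norm_lt _ hspec).norm_left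

theorem tendsto_inv_pow_smul_pow {A : Matrix n n ℝ} {r : ℝ} (hr : 0 < r) {u v : n → ℝ}
    (hv : A *ᵥ v = r • v) (hu : u ᵥ* A = r • u) (huv : u ⬝ᵥ v = 1)
    (hsimple : (A.map (algebraMap ℝ ℂ)).charpoly.rootMultiplicity (r : ℂ) = 1)
    (hdom : ∀ μ : ℂ, (A.map (algebraMap ℝ ℂ)).charpoly.IsRoot μ → μ ≠ r → ‖μ‖ < r) :
    Tendsto (fun k : ℕ => (r ^ k)⁻¹ • A ^ k) atTop (𝓝 (vecMulVec v u)) := by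
  refine tendsto_inv_pow_smul_pow_of_isIdempotentElem hr.ne' ?_ ?_ ?_
    (isLittleO_pow_sub_smul_vecMulVec hr hv hu huv hsimple hdom)
  · rw [IsIdempotentElem, vecMulVec_mul_vecMulVec, huv, one_smul]
  · rw [mul_vecMulVec, hv, smul_vecMulVec]
  · rw [vecMulVec_mul, hu, vecMulVec_smul]

end Asymptotics

end Matrix

/-- Perron-type asymptotics. If `r > 0` is a simple eigenvalue of `A`
dominating all other (complex) eigenvalues in modulus, with right eigenvector `v` and
left eigenvector `u` normalized by `(u,v) = 1`, then `r^{-n} A^n x → (u,x) v`. -/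
theorem stmt7 {d : ℕ} (A : Matrix (Fin d) (Fin d) ℝ) (r : ℝ) (hr : 0 < r)
    (u v : Fin d → ℝ)
    (hv : A.mulVec v = r • v)
    (hu : A.transpose.mulVec u = r • u)
    (hnorm : dotProduct u v = 1)
    (hsimple : ((A.map (algebraMap ℝ ℂ)).charpoly).rootMultiplicity (r : ℂ) = 1)
    (hdom : ∀ μ : ℂ, ((A.map (algebraMap ℝ ℂ)).charpoly).IsRoot μ → μ ≠ (r : ℂ) →
      ‖μ‖ < r)
    (x : Fin d → ℝ) :
    Tendsto (fun n : ℕ => (r ^ n)⁻¹ • (A ^ n).mulVec x) atTop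
      (nhds ((dotProduct u x) • v)) := by
  rw [Matrix.mulVec_transpose] at hu
  have hlim := Matrix.tendsto_inv_pow_smul_pow hr hv hu hnorm hsimple hdom
  have hx := ((continuous_id.matrix_mulVec (continuous_const (y := x))).tendsto _).comp hlim
  simpa [Function.comp_def, Matrix.smul_mulVec, Matrix.vecMulVec_mulVec] using hx
end

section
/- Let (E, F) be a symmetric bilinear form with F ⊆ C(K) for a compact space K, and suppose there is C > 0 such that (max_{x∈K} f(x) − min_{x∈K} f(x))² ≤ C·E(f,f) for all f ∈ F. Let μ be a Borel probability measure on K with full support. Then for every nonempty open set U ⊆ K and every f ∈ F with f ≥ 1 μ-a.e. on U, one has E(f,f) + ∫_K f² dμ ≥ min{1/(4C), 1/4}. In particular the capacity of every nonempty open set is bounded below by min{1/(4C), 1/4}. -/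
/-!
Since `U` has positive measure, `f ≥ 1` somewhere, so `sup f ≥ 1`. Either `inf f ≥ 1/2`, and then
`∫ f² dμ ≥ 1/4` because `μ` is a probability measure, or `osc f ≥ 1/2`, and then the resistance
estimate gives `E(f,f) ≥ 1/(4C)`. Both terms of the sum are nonnegative.
-/

open MeasureTheory

theorem exists_mem_of_ae_imp {α : Type*} [MeasurableSpace α] {μ : Measure α} {s : Set α}
    {p : α → Prop} (hs : μ s ≠ 0) (h : ∀ᵐ x ∂μ, x ∈ s → p x) : ∃ x ∈ s, p x := by
  by_contra! hnot
  exact hs <| measure_eq_zero_iff_ae_notMem.mpr <|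
    h.mono fun x hx hxs => hnot x hxs (hx hxs)

theorem sq_le_integral_sq_of_le {K : Type*} [TopologicalSpace K] [CompactSpace K]
    [MeasurableSpace K] [OpensMeasurableSpace K] (μ : Measure K) [IsProbabilityMeasure μ]
    {f : C(K, ℝ)} {a : ℝ} (ha : 0 ≤ a) (hf : ∀ x, a ≤ f x) :
    a ^ 2 ≤ ∫ x, (f x) ^ 2 ∂μ := by
  have hint : Integrable (fun x => (f x) ^ 2) μ :=
    (f.continuous.pow 2).integrable_of_hasCompactSupport (HasCompactSupport.of_compactSpace _)
  simpa using integral_mono (integrable_const (a ^ 2)) hint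
    fun x => pow_le_pow_left₀ ha (hf x) 2

theorem one_div_four_mul_le_of_sq_le {C e d : ℝ} (hC : 0 < C) (hd : 1 / 2 ≤ d)
    (h : d ^ 2 ≤ C * e) : 1 / (4 * C) ≤ e := by
  rw [div_le_iff₀ (by positivity)]
  nlinarith

theorem stmt9_general {K : Type*} [TopologicalSpace K] [CompactSpace K]
    [MeasurableSpace K] [BorelSpace K]
    (F : Set C(K, ℝ)) (E : C(K, ℝ) → C(K, ℝ) → ℝ)
    (C : ℝ) (hC : 0 < C)
    (hres : ∀ f ∈ F, ((⨆ x, f x) - ⨅ x, f x) ^ 2 ≤ C * E f f)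
    (μ : Measure K) [IsProbabilityMeasure μ]
    (hsupp : ∀ U : Set K, IsOpen U → U.Nonempty → 0 < μ U)
    (U : Set K) (hU : IsOpen U) (hUne : U.Nonempty)
    (f : C(K, ℝ)) (hf : f ∈ F)
    (hf1 : ∀ᵐ x ∂μ, x ∈ U → 1 ≤ f x) :
    min (1 / (4 * C)) (1 / 4) ≤ E f f + ∫ x, (f x) ^ 2 ∂μ := by
  obtain ⟨x₀, -, hx₀⟩ := exists_mem_of_ae_imp (hsupp U hU hUne).ne' hf1
  have hsup : 1 ≤ ⨆ x, f x :=
    hx₀.trans (le_ciSup (isCompact_range f.continuous).bddAbove x₀)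
  have hE : 0 ≤ E f f :=
    nonneg_of_mul_nonneg_right ((sq_nonneg _).trans (hres f hf)) hC
  have hint : 0 ≤ ∫ x, (f x) ^ 2 ∂μ := integral_nonneg fun x => sq_nonneg _
  by_cases hinf : 1 / 2 ≤ ⨅ x, f x
  · have hf_half : ∀ x, 1 / 2 ≤ f x := fun x =>
      hinf.trans (ciInf_le (isCompact_range f.continuous).bddBelow x)
    have := sq_le_integral_sq_of_le μ (by norm_num) hf_half
    linarith [min_le_right (1 / (4 * C)) (1 / 4)]
  · have := one_div_four_mul_le_of_sq_le hC (by linarith) (hres f hf)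
    linarith [min_le_left (1 / (4 * C)) (1 / 4)]

/-- uniform positivity of capacity from the resistance estimate
`(osc f)² ≤ C·E(f,f)`: for any nonempty open `U` and `f ∈ F` with `f ≥ 1` μ-a.e. on `U`,
`E(f,f) + ∫ f² dμ ≥ min(1/(4C), 1/4)`. -/
theorem stmt9 {K : Type*} [TopologicalSpace K] [CompactSpace K] [Nonempty K]
    [MeasurableSpace K] [BorelSpace K]
    (F : Set C(K, ℝ)) (E : C(K, ℝ) → C(K, ℝ) → ℝ)
    (C : ℝ) (hC : 0 < C)
    (hres : ∀ f ∈ F, ((⨆ x, f x) - ⨅ x, f x) ^ 2 ≤ C * E f f)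
    (μ : Measure K) [IsProbabilityMeasure μ]
    (hsupp : ∀ U : Set K, IsOpen U → U.Nonempty → 0 < μ U)
    (U : Set K) (hU : IsOpen U) (hUne : U.Nonempty)
    (f : C(K, ℝ)) (hf : f ∈ F)
    (hf1 : ∀ᵐ x ∂μ, x ∈ U → 1 ≤ f x) :
    min (1 / (4 * C)) (1 / 4) ≤ E f f + ∫ x, (f x) ^ 2 ∂μ :=
  stmt9_general F E C hC hres μ hsupp U hU hUne f hf hf1
end
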